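/- arXiv:math/0407094 — 9 statements merged into one kernel-verified Lean document; each statement's English description precedes it below -/
import Mathlib

section
/- For the planar vector field F(x,y) = (-y, x), the function u(x,y) = -a b x^2 + (a^2 - b^2) x y + a b y^2 + g(-b x + a y), where a, b are real constants with a^2 + b^2 = 1 and g is a C^2 function, satisfies the p-minimal surface equation div((∇u + F)/|∇u + F|) = 0 at every point where ∇u + F ≠ 0. -/
/-!
Writing `h = 2ax + 2by + g'(-bx + ay)`, the identity `a² + b² = 1` gives `∇u + F = h · (-b, a)`,
so `(∇u + F)/|∇u + F| = sign h · (-b, a)`. Since `g` is `C¹`, `h` is continuous, hence its sign is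
locally constant where `h ≠ 0`, and both partial derivatives in the divergence vanish.
-/

open Real Filter Topology

theorem div_abs_eq_sign {α : Type*} [Field α] [LinearOrder α] [IsStrictOrderedRing α] (x : α) :
    x / |x| = SignType.sign x := by
  rcases eq_or_ne x 0 with rfl | hx
  · simp
  · nth_rw 1 [← sign_mul_abs x]
    exact mul_div_cancel_right₀ _ (abs_ne_zero.2 hx)

theorem eventuallyEq_div_abs_of_ne_zero {X : Type*} [TopologicalSpace X] {f : X → ℝ} {p : X}
    (hf : ContinuousAt f p) (hp : f p ≠ 0) :
    (fun t => f t / |f t|) =ᶠ[𝓝 p] fun _ => f p / |f p| := by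
  have hsign : ∀ᶠ t in 𝓝 p, SignType.sign (f t) = SignType.sign (f p) :=
    tendsto_pure.1 (nhds_discrete SignType ▸ (continuousAt_sign_of_ne_zero hp).comp hf)
  filter_upwards [hsign] with t ht
  rw [div_abs_eq_sign, div_abs_eq_sign, ht]

theorem deriv_const_mul_div_abs_of_ne_zero (c : ℝ) {f : ℝ → ℝ} {p : ℝ} (hf : ContinuousAt f p)
    (hp : f p ≠ 0) : deriv (fun t => c * (f t / |f t|)) p = 0 :=
  ((eventuallyEq_div_abs_of_ne_zero hf hp).fun_comp (c * ·)).deriv_eq.trans (deriv_const _ _)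

theorem sqrt_mul_sq_add_mul_sq {c d : ℝ} (hcd : c ^ 2 + d ^ 2 = 1) (t : ℝ) :
    √((c * t) ^ 2 + (d * t) ^ 2) = |t| := by
  rw [← sqrt_sq_eq_abs]
  congr 1
  linear_combination t ^ 2 * hcd

section GraphFamily

variable (a b : ℝ) (g : ℝ → ℝ)

def graphFamily (x y : ℝ) : ℝ :=
  -a * b * x ^ 2 + (a ^ 2 - b ^ 2) * x * y + a * b * y ^ 2 + g (-b * x + a * y)

/-- The common scalar factor of the two components of `∇u + F`. -/
noncomputable def graphFamilyFactor (x y : ℝ) : ℝ :=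
  2 * a * x + 2 * b * y + deriv g (-b * x + a * y)

variable {g}

theorem hasDerivAt_graphFamily_fst (hg : Differentiable ℝ g) (x y : ℝ) :
    HasDerivAt (fun x' => graphFamily a b g x' y)
      (-2 * a * b * x + (a ^ 2 - b ^ 2) * y + deriv g (-b * x + a * y) * (-b)) x := by
  have hlin : HasDerivAt (fun x' : ℝ => -b * x' + a * y) (-b) x := by
    simpa using ((hasDerivAt_id x).const_mul (-b)).add_const (a * y)
  have hpoly := (((hasDerivAt_pow 2 x).const_mul (-a * b)).add
    (((hasDerivAt_id x).const_mul (a ^ 2 - b ^ 2)).mul_const y)).add_const (a * b * y ^ 2)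
  refine (hpoly.add ((hg _).hasDerivAt.comp x hlin)).congr_deriv ?_
  simp only [Nat.cast_ofNat, Nat.add_one_sub_one, pow_one, mul_one]
  ring

theorem hasDerivAt_graphFamily_snd (hg : Differentiable ℝ g) (x y : ℝ) :
    HasDerivAt (fun y' => graphFamily a b g x y')
      ((a ^ 2 - b ^ 2) * x + 2 * a * b * y + deriv g (-b * x + a * y) * a) y := by
  have hlin : HasDerivAt (fun y' : ℝ => -b * x + a * y') a y := by
    simpa using ((hasDerivAt_id y).const_mul a).const_add (-b * x)
  have hpoly := (((hasDerivAt_id y).const_mul ((a ^ 2 - b ^ 2) * x)).const_add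
    (-a * b * x ^ 2)).add ((hasDerivAt_pow 2 y).const_mul (a * b))
  refine (hpoly.add ((hg _).hasDerivAt.comp y hlin)).congr_deriv ?_
  simp only [Nat.cast_ofNat, Nat.add_one_sub_one, pow_one, mul_one]
  ring

variable {a b}

theorem deriv_graphFamily_fst_add_neg (hab : a ^ 2 + b ^ 2 = 1) (hg : Differentiable ℝ g)
    (x y : ℝ) : deriv (fun x' => graphFamily a b g x' y) x + (-y) =
      -b * graphFamilyFactor a b g x y := by
  rw [(hasDerivAt_graphFamily_fst a b hg x y).deriv, graphFamilyFactor]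
  linear_combination y * hab

theorem deriv_graphFamily_snd_add (hab : a ^ 2 + b ^ 2 = 1) (hg : Differentiable ℝ g)
    (x y : ℝ) : deriv (fun y' => graphFamily a b g x y') y + x =
      a * graphFamilyFactor a b g x y := by
  rw [(hasDerivAt_graphFamily_snd a b hg x y).deriv, graphFamilyFactor]
  linear_combination (-x) * hab

theorem continuous_graphFamilyFactor (hg : ContDiff ℝ 1 g) :
    Continuous fun p : ℝ × ℝ => graphFamilyFactor a b g p.1 p.2 := by
  have hg' := hg.continuous_deriv le_rfl
  unfold graphFamilyFactor
  fun_prop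

end GraphFamily

/-- The p-minimal surface equation for `u(x,y) = -abx² + (a²-b²)xy + aby² + g(-bx+ay)`:
`div((∇u + F)/|∇u + F|) = 0` wherever `∇u + F ≠ 0`, with `F(x,y) = (-y, x)`. -/
theorem pmin_graph_family_one (a b : ℝ) (hab : a ^ 2 + b ^ 2 = 1)
    (g : ℝ → ℝ) (hg : ContDiff ℝ 2 g)
    (u : ℝ → ℝ → ℝ)
    (hu : ∀ x y, u x y =
      -a * b * x ^ 2 + (a ^ 2 - b ^ 2) * x * y + a * b * y ^ 2 + g (-b * x + a * y))
    (W₁ W₂ : ℝ → ℝ → ℝ)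
    (hW₁ : ∀ x y, W₁ x y = deriv (fun x' => u x' y) x + (-y))
    (hW₂ : ∀ x y, W₂ x y = deriv (fun y' => u x y') y + x)
    (x y : ℝ) (hne : (W₁ x y, W₂ x y) ≠ (0, 0)) :
    deriv (fun x' => W₁ x' y / Real.sqrt ((W₁ x' y) ^ 2 + (W₂ x' y) ^ 2)) x +
      deriv (fun y' => W₂ x y' / Real.sqrt ((W₁ x y') ^ 2 + (W₂ x y') ^ 2)) y = 0 := by
  obtain rfl : u = graphFamily a b g := funext fun x => funext (hu x)
  have hg₁ : ContDiff ℝ 1 g := hg.of_le one_le_two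
  have hgd : Differentiable ℝ g := hg₁.differentiable one_ne_zero
  set h := graphFamilyFactor a b g
  have hW₁h : ∀ x y, W₁ x y = -b * h x y := fun x y => by
    rw [hW₁, deriv_graphFamily_fst_add_neg hab hgd]
  have hW₂h : ∀ x y, W₂ x y = a * h x y := fun x y => by
    rw [hW₂, deriv_graphFamily_snd_add hab hgd]
  have hunit : (-b) ^ 2 + a ^ 2 = 1 := by linear_combination hab
  have hh : h x y ≠ 0 := fun h0 => hne (by simp [hW₁h, hW₂h, h0])
  have hcont := continuous_graphFamilyFactor (a := a) (b := b) hg₁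
  simp only [hW₁h, hW₂h, sqrt_mul_sq_add_mul_sq hunit, mul_div_assoc]
  rw [deriv_const_mul_div_abs_of_ne_zero (f := (h · y)) _
      (hcont.comp (continuous_id.prodMk continuous_const)).continuousAt hh,
    deriv_const_mul_div_abs_of_ne_zero (f := (h x ·)) _
      (hcont.comp (continuous_const.prodMk continuous_id)).continuousAt hh, add_zero]
end

section
/- Let X(s,t) = (s sin θ(t) + α(t), -s cos θ(t) + β(t), s(β(t) sin θ(t) + α(t) cos θ(t)) + γ(t)) with α, β, γ, θ of class C². Writing δ(t) = α cos θ + β sin θ and ξ(t) = α sin θ - β cos θ, the cross product ∂ₛX × ∂ₜX vanishes at (s,t) if and only if both (s + ξ(t)) θ'(t) + δ'(t) = 0 and s δ'(t) + γ'(t) - δ(t)(ξ'(t) - δ(t) θ'(t)) = 0 hold. -/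
/-!
The horizontal part of `∂ₛX = (sin θ, -cos θ, δ)` is a unit vector, so `∂ₛX × ∂ₜX = 0` exactly
when `∂ₜX = λ ∂ₛX` with `λ = sin θ · ∂ₜX₁ - cos θ · ∂ₜX₂`. The horizontal component of `∂ₜX`
normal to `(sin θ, -cos θ)` is `(s + ξ) θ' + δ'`, which is the first condition, and
`λ = ξ' - δ θ'`, so comparing the vertical components `s δ' + γ' = λ δ` gives the second.
-/

open Real

def cross3 (u v : ℝ × ℝ × ℝ) : ℝ × ℝ × ℝ :=
  (u.2.1 * v.2.2 - u.2.2 * v.2.1, u.2.2 * v.1 - u.1 * v.2.2, u.1 * v.2.1 - u.2.1 * v.1)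

theorem cross3_eq_zero_iff_of_sq_add_sq_eq_one {a b d : ℝ} (v : ℝ × ℝ × ℝ)
    (hab : a ^ 2 + b ^ 2 = 1) :
    cross3 (a, b, d) v = (0, 0, 0) ↔
      a * v.2.1 - b * v.1 = 0 ∧ v.2.2 - (a * v.1 + b * v.2.1) * d = 0 := by
  obtain ⟨x, y, z⟩ := v
  simp only [cross3, Prod.mk.injEq]
  constructor
  · rintro ⟨h₁, h₂, h₃⟩
    exact ⟨h₃, by linear_combination b * h₁ - a * h₂ - z * hab⟩
  · rintro ⟨h₃, hz⟩
    refine ⟨?_, ?_, h₃⟩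
    · linear_combination b * hz - a * d * h₃ + d * y * hab
    · linear_combination -a * hz - b * d * h₃ - d * x * hab

section RotatedDerivatives

variable {f g θ : ℝ → ℝ} {f' g' θ' t : ℝ}

theorem HasDerivAt.mul_cos_add_mul_sin (hf : HasDerivAt f f' t) (hg : HasDerivAt g g' t)
    (hθ : HasDerivAt θ θ' t) :
    HasDerivAt (fun t => f t * Real.cos (θ t) + g t * Real.sin (θ t))
      (f' * Real.cos (θ t) + g' * Real.sin (θ t) -
        (f t * Real.sin (θ t) - g t * Real.cos (θ t)) * θ') t :=
  ((hf.mul hθ.cos).add (hg.mul hθ.sin)).congr_deriv (by ring)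

theorem HasDerivAt.mul_sin_sub_mul_cos (hf : HasDerivAt f f' t) (hg : HasDerivAt g g' t)
    (hθ : HasDerivAt θ θ' t) :
    HasDerivAt (fun t => f t * Real.sin (θ t) - g t * Real.cos (θ t))
      (f' * Real.sin (θ t) - g' * Real.cos (θ t) +
        (f t * Real.cos (θ t) + g t * Real.sin (θ t)) * θ') t :=
  ((hf.mul hθ.sin).sub (hg.mul hθ.cos)).congr_deriv (by ring)

end RotatedDerivatives

/-- Theorem A (a): the cross product ∂ₛX × ∂ₜX vanishes at (s,t) iff both
(2.8a) and (2.8b) hold. -/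
theorem crossProduct_vanishes_iff (α β γ θ : ℝ → ℝ)
    (hα : ContDiff ℝ 2 α) (hβ : ContDiff ℝ 2 β) (hγ : ContDiff ℝ 2 γ) (hθ : ContDiff ℝ 2 θ)
    (X : ℝ → ℝ → ℝ × ℝ × ℝ)
    (hX : ∀ s t, X s t =
      (s * Real.sin (θ t) + α t, -s * Real.cos (θ t) + β t,
        s * (β t * Real.sin (θ t) + α t * Real.cos (θ t)) + γ t))
    (δ ξ : ℝ → ℝ)
    (hδ : ∀ t, δ t = α t * Real.cos (θ t) + β t * Real.sin (θ t))
    (hξ : ∀ t, ξ t = α t * Real.sin (θ t) - β t * Real.cos (θ t))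
    (s t : ℝ) :
    cross3
      (deriv (fun s' => (X s' t).1) s, deriv (fun s' => (X s' t).2.1) s,
        deriv (fun s' => (X s' t).2.2) s)
      (deriv (fun t' => (X s t').1) t, deriv (fun t' => (X s t').2.1) t,
        deriv (fun t' => (X s t').2.2) t) = (0, 0, 0)
    ↔ ((s + ξ t) * deriv θ t + deriv δ t = 0 ∧
        s * deriv δ t + deriv γ t - δ t * (deriv ξ t - δ t * deriv θ t) = 0) := by
  have hasDerivAt_deriv {f : ℝ → ℝ} (hf : ContDiff ℝ 2 f) : HasDerivAt f (deriv f t) t :=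
    (hf.differentiable two_ne_zero t).hasDerivAt
  have hα' := hasDerivAt_deriv hα
  have hβ' := hasDerivAt_deriv hβ
  have hθ' := hasDerivAt_deriv hθ
  have hδ' : HasDerivAt δ _ t := funext hδ ▸ hα'.mul_cos_add_mul_sin hβ' hθ'
  have hξ' : HasDerivAt ξ _ t := funext hξ ▸ hα'.mul_sin_sub_mul_cos hβ' hθ'
  have hX' : ∀ s t, X s t = (s * sin (θ t) + α t, -s * cos (θ t) + β t, s * δ t + γ t) :=
    fun s t => by rw [hX, hδ, add_comm (α t * _)]
  have hXs : (deriv (fun s' => (X s' t).1) s, deriv (fun s' => (X s' t).2.1) s,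
      deriv (fun s' => (X s' t).2.2) s) = (sin (θ t), -cos (θ t), δ t) := by
    simp [hX']
  have hXt : (deriv (fun t' => (X s t').1) t, deriv (fun t' => (X s t').2.1) t,
      deriv (fun t' => (X s t').2.2) t) =
      (s * (cos (θ t) * deriv θ t) + deriv α t, -s * (-sin (θ t) * deriv θ t) + deriv β t,
        s * deriv δ t + deriv γ t) := by
    simp only [hX', Prod.mk.injEq]
    exact ⟨((hθ'.sin.const_mul s).add hα').deriv, ((hθ'.cos.const_mul (-s)).add hβ').deriv,
      ((hδ'.differentiableAt.hasDerivAt.const_mul s).add (hasDerivAt_deriv hγ)).deriv⟩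
  have hunit : sin (θ t) ^ 2 + (-cos (θ t)) ^ 2 = 1 := by rw [neg_sq, sin_sq_add_cos_sq]
  rw [hXs, hXt, cross3_eq_zero_iff_of_sq_add_sq_eq_one _ hunit, hδ'.deriv, hξ'.deriv, hδ, hξ]
  congr! 2
  · linear_combination s * deriv θ t * sin_sq_add_cos_sq (θ t)
  · ring
end

section
/- With X(s,t) as above and δ, ξ as defined, the cross product ∂ₛX × ∂ₜX at (s,t) is parallel to the vector (-y(s,t), x(s,t), 1) if and only if [(s + ξ(t))² + δ(t)²] θ'(t) + (2s + ξ(t)) δ'(t) + γ'(t) - δ(t) ξ'(t) = 0. -/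
/-!
Over each `t`, write the horizontal plane in the orthonormal frame `e₁ = (sin θ, -cos θ)`,
`e₂ = (cos θ, sin θ)`. Then `(x, y) = (s + ξ) e₁ + δ e₂` and `z = s δ + γ`, so `∂ₛX = e₁ + δ e₃`.
Both `∂ₛX × ∂ₜX` and `(-y, x, 1)` are orthogonal to `∂ₛX`; subtracting from the normal the multiple
of `(-y, x, 1)` with the same `e₃`-component leaves `-E e₂`, where `E` is the left-hand side of the
singularity equation.
-/

open Real

theorem exists_eq_smul_mk_one_iff {R : Type*} [CommRing R] (w : R × R × R) (p q : R) :
    (∃ c : R, w = c • (p, q, 1)) ↔ w - w.2.2 • (p, q, 1) = 0 := by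
  rw [sub_eq_zero]
  refine ⟨fun ⟨c, hc⟩ => ?_, fun h => ⟨_, h⟩⟩
  have hc₃ : w.2.2 = c := by simpa using congrArg (·.2.2) hc
  rwa [hc₃]

theorem smul_mk_cos_sin_zero_eq_zero_iff (E φ : ℝ) :
    E • (cos φ, sin φ, (0 : ℝ)) = 0 ↔ E = 0 := by
  refine ⟨fun h => ?_, fun h => by simp [h]⟩
  simp only [Prod.smul_mk, smul_eq_mul, mul_zero, Prod.mk_eq_zero, and_true] at h
  linear_combination (-E) * sin_sq_add_cos_sq φ + sin φ * h.2 + cos φ * h.1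

/-- With `e₁ = (S, -C, 0)`, `e₂ = (C, S, 0)`: the cross product of `e₁ + δ e₃` and
`A e₁ + B e₂ + Γ e₃`, compared with `(-y, x, 1)` at the point `σ e₁ + δ e₂`. -/
theorem cross3_sub_smul_eq_smul {S C : ℝ} (hSC : S ^ 2 + C ^ 2 = 1) (σ δ A B Γ : ℝ) :
    letI n := cross3 (S, -C, δ) (A * S + B * C, -A * C + B * S, Γ)
    n - n.2.2 • (-(-σ * C + δ * S), σ * S + δ * C, (1 : ℝ))
      = (δ * A - Γ - σ * B) • (C, S, (0 : ℝ)) := by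
  simp only [cross3, Prod.smul_mk, smul_eq_mul, Prod.mk_sub_mk, Prod.mk.injEq]
  refine ⟨?_, ?_, by ring⟩
  · linear_combination (δ * B * S - C * B * σ) * hSC
  · linear_combination (-δ * B * C - S * B * σ) * hSC

noncomputable def ruledSurface (δ ξ γ θ : ℝ → ℝ) (s t : ℝ) : ℝ × ℝ × ℝ :=
  ((s + ξ t) * sin (θ t) + δ t * cos (θ t), -(s + ξ t) * cos (θ t) + δ t * sin (θ t),
    s * δ t + γ t)

theorem ruledSurface_eq (α β γ θ : ℝ → ℝ) (s t : ℝ) :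
    ruledSurface (fun t => α t * cos (θ t) + β t * sin (θ t))
        (fun t => α t * sin (θ t) - β t * cos (θ t)) γ θ s t
      = (s * sin (θ t) + α t, -s * cos (θ t) + β t,
          s * (β t * sin (θ t) + α t * cos (θ t)) + γ t) := by
  simp only [ruledSurface, Prod.mk.injEq]
  refine ⟨?_, ?_, by ring⟩
  · linear_combination α t * sin_sq_add_cos_sq (θ t)
  · linear_combination β t * sin_sq_add_cos_sq (θ t)

section RuledSurface

variable {δ ξ γ θ : ℝ → ℝ}

theorem deriv_ruledSurface_s (s t : ℝ) :
    (deriv (fun s' => (ruledSurface δ ξ γ θ s' t).1) s,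
      deriv (fun s' => (ruledSurface δ ξ γ θ s' t).2.1) s,
      deriv (fun s' => (ruledSurface δ ξ γ θ s' t).2.2) s)
      = (sin (θ t), -cos (θ t), δ t) := by
  simp only [ruledSurface, Prod.mk.injEq]
  refine ⟨?_, ?_, ?_⟩
  · exact ((((hasDerivAt_id s).add_const _).mul_const _).add_const _).deriv.trans (by simp)
  · exact ((((hasDerivAt_id s).add_const _).neg.mul_const _).add_const _).deriv.trans (by simp)
  · exact (((hasDerivAt_id s).mul_const _).add_const _).deriv.trans (by simp)

theorem deriv_ruledSurface_t {t : ℝ} (hδ : DifferentiableAt ℝ δ t) (hξ : DifferentiableAt ℝ ξ t)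
    (hγ : DifferentiableAt ℝ γ t) (hθ : DifferentiableAt ℝ θ t) (s : ℝ) :
    let A := deriv ξ t - δ t * deriv θ t
    let B := (s + ξ t) * deriv θ t + deriv δ t
    (deriv (fun t' => (ruledSurface δ ξ γ θ s t').1) t,
      deriv (fun t' => (ruledSurface δ ξ γ θ s t').2.1) t,
      deriv (fun t' => (ruledSurface δ ξ γ θ s t').2.2) t)
      = (A * sin (θ t) + B * cos (θ t), -A * cos (θ t) + B * sin (θ t),
          s * deriv δ t + deriv γ t) := by
  have hsin := hθ.hasDerivAt.sin
  have hcos := hθ.hasDerivAt.cos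
  have hσ := hξ.hasDerivAt.const_add s
  simp only [ruledSurface, Prod.mk.injEq]
  refine ⟨?_, ?_, ?_⟩
  · refine ((hσ.mul hsin).add (hδ.hasDerivAt.mul hcos)).deriv.trans ?_; ring
  · refine ((hσ.neg.mul hcos).add (hδ.hasDerivAt.mul hsin)).deriv.trans ?_
    rw [Pi.neg_apply]; ring
  · exact ((hδ.hasDerivAt.const_mul s).add hγ.hasDerivAt).deriv

theorem ruledSurface_normal_parallel_iff {t : ℝ} (hδ : DifferentiableAt ℝ δ t)
    (hξ : DifferentiableAt ℝ ξ t) (hγ : DifferentiableAt ℝ γ t) (hθ : DifferentiableAt ℝ θ t)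
    (s : ℝ) :
    letI X := ruledSurface δ ξ γ θ
    (∃ c : ℝ,
      cross3
        (deriv (fun s' => (X s' t).1) s, deriv (fun s' => (X s' t).2.1) s,
          deriv (fun s' => (X s' t).2.2) s)
        (deriv (fun t' => (X s t').1) t, deriv (fun t' => (X s t').2.1) t,
          deriv (fun t' => (X s t').2.2) t)
        = c • (-(X s t).2.1, (X s t).1, (1 : ℝ)))
    ↔ ((s + ξ t) ^ 2 + (δ t) ^ 2) * deriv θ t + (2 * s + ξ t) * deriv δ t
        + deriv γ t - δ t * deriv ξ t = 0 := by
  rw [deriv_ruledSurface_s, deriv_ruledSurface_t hδ hξ hγ hθ, exists_eq_smul_mk_one_iff]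
  dsimp only [ruledSurface]
  rw [cross3_sub_smul_eq_smul (sin_sq_add_cos_sq (θ t)),
    smul_mk_cos_sin_zero_eq_zero_iff, ← neg_eq_zero]
  constructor <;> intro h <;> linear_combination h

end RuledSurface

/-- Theorem A (b): ∂ₛX × ∂ₜX is parallel to (-y, x, 1) at (s,t) iff the
singularity equation (2.9) holds. -/
theorem singular_point_iff (α β γ θ : ℝ → ℝ)
    (hα : ContDiff ℝ 2 α) (hβ : ContDiff ℝ 2 β) (hγ : ContDiff ℝ 2 γ) (hθ : ContDiff ℝ 2 θ)
    (X : ℝ → ℝ → ℝ × ℝ × ℝ)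
    (hX : ∀ s t, X s t =
      (s * Real.sin (θ t) + α t, -s * Real.cos (θ t) + β t,
        s * (β t * Real.sin (θ t) + α t * Real.cos (θ t)) + γ t))
    (δ ξ : ℝ → ℝ)
    (hδ : ∀ t, δ t = α t * Real.cos (θ t) + β t * Real.sin (θ t))
    (hξ : ∀ t, ξ t = α t * Real.sin (θ t) - β t * Real.cos (θ t))
    (s t : ℝ) :
    (∃ c : ℝ,
      cross3
        (deriv (fun s' => (X s' t).1) s, deriv (fun s' => (X s' t).2.1) s,
          deriv (fun s' => (X s' t).2.2) s)
        (deriv (fun t' => (X s t').1) t, deriv (fun t' => (X s t').2.1) t,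
          deriv (fun t' => (X s t').2.2) t)
        = c • (-(X s t).2.1, (X s t).1, (1 : ℝ)))
    ↔ ((s + ξ t) ^ 2 + (δ t) ^ 2) * deriv θ t + (2 * s + ξ t) * deriv δ t
        + deriv γ t - δ t * deriv ξ t = 0 := by
  obtain rfl : δ = _ := funext hδ
  obtain rfl : ξ = _ := funext hξ
  obtain rfl : X = ruledSurface _ _ γ θ :=
    funext₂ fun s t => (hX s t).trans (ruledSurface_eq ..).symm
  have hα' := hα.differentiable two_ne_zero t
  have hβ' := hβ.differentiable two_ne_zero t
  have hθ' := hθ.differentiable two_ne_zero t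
  exact ruledSurface_normal_parallel_iff (by fun_prop) (by fun_prop)
    (hγ.differentiable two_ne_zero t) hθ' s
end

section
/- With notation as above and ẑᵢ = βᵢ x̂ - αᵢ ŷ + γᵢ (the z-coordinate of the characteristic line over the intersection point), the difference satisfies ẑ₂ - ẑ₁ = -[(α₂-α₁) cos θ₂ + (β₂-β₁) sin θ₂][(α₂-α₁) cos θ₁ + (β₂-β₁) sin θ₁]/sin(θ₂-θ₁) - (α₂ β₁ - α₁ β₂) + γ₂ - γ₁. -/
open Real

/-- Formula (2.14) for the height difference ẑ₂ - ẑ₁ over the intersection point. -/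
theorem height_difference_formula (α₁ α₂ β₁ β₂ γ₁ γ₂ θ₁ θ₂ xI yI : ℝ)
    (hsin : Real.sin (θ₂ - θ₁) ≠ 0)
    (h₁ : (xI - α₁) * Real.cos θ₁ + (yI - β₁) * Real.sin θ₁ = 0)
    (h₂ : (xI - α₂) * Real.cos θ₂ + (yI - β₂) * Real.sin θ₂ = 0) :
    (β₂ * xI - α₂ * yI + γ₂) - (β₁ * xI - α₁ * yI + γ₁)
      = -((α₂ - α₁) * Real.cos θ₂ + (β₂ - β₁) * Real.sin θ₂) *
          ((α₂ - α₁) * Real.cos θ₁ + (β₂ - β₁) * Real.sin θ₁) / Real.sin (θ₂ - θ₁)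
        - (α₂ * β₁ - α₁ * β₂) + γ₂ - γ₁ := by
  rw [Real.sin_sub] at hsin ⊢
  field_simp
  linear_combination (((α₂-α₁)*Real.cos θ₂+(β₂-β₁)*Real.sin θ₂)*h₁ - ((α₂-α₁)*Real.cos θ₁+(β₂-β₁)*Real.sin θ₁)*h₂)
end

section
/- If (αᵢ, βᵢ) = δᵢ (cos θᵢ, sin θᵢ) for real numbers δ₁, δ₂ (i.e., ξ = 0), and sin(θ₂ - θ₁) ≠ 0, then the height difference at the intersection point simplifies to ẑ₂ - ẑ₁ = (2 δ₁ δ₂ - (δ₁² + δ₂²) cos(θ₂ - θ₁))/sin(θ₂ - θ₁) + γ₂ - γ₁. -/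
open Real

/-- Formula (2.15): with ξ = 0, i.e. (αᵢ, βᵢ) = δᵢ(cos θᵢ, sin θᵢ), the height
difference at the intersection point simplifies. -/
theorem height_difference_simplified (α₁ α₂ β₁ β₂ γ₁ γ₂ θ₁ θ₂ δ₁ δ₂ xI yI : ℝ)
    (hsin : Real.sin (θ₂ - θ₁) ≠ 0)
    (hα₁ : α₁ = δ₁ * Real.cos θ₁) (hβ₁ : β₁ = δ₁ * Real.sin θ₁)
    (hα₂ : α₂ = δ₂ * Real.cos θ₂) (hβ₂ : β₂ = δ₂ * Real.sin θ₂)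
    (h₁ : (xI - α₁) * Real.cos θ₁ + (yI - β₁) * Real.sin θ₁ = 0)
    (h₂ : (xI - α₂) * Real.cos θ₂ + (yI - β₂) * Real.sin θ₂ = 0) :
    (β₂ * xI - α₂ * yI + γ₂) - (β₁ * xI - α₁ * yI + γ₁)
      = (2 * δ₁ * δ₂ - (δ₁ ^ 2 + δ₂ ^ 2) * Real.cos (θ₂ - θ₁)) / Real.sin (θ₂ - θ₁)
        + γ₂ - γ₁ := by
  have p1 := Real.sin_sq_add_cos_sq θ₁
  have p2 := Real.sin_sq_add_cos_sq θ₂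
  subst hα₁ hβ₁ hα₂ hβ₂
  rw [Real.sin_sub, Real.cos_sub] at *
  have e₁ : xI * Real.cos θ₁ + yI * Real.sin θ₁ = δ₁ := by linear_combination h₁ + δ₁ * p1
  have e₂ : xI * Real.cos θ₂ + yI * Real.sin θ₂ = δ₂ := by linear_combination h₂ + δ₂ * p2
  have hx : (Real.sin θ₂ * Real.cos θ₁ - Real.cos θ₂ * Real.sin θ₁) * xI
      = δ₁ * Real.sin θ₂ - δ₂ * Real.sin θ₁ := by
    linear_combination Real.sin θ₂ * e₁ - Real.sin θ₁ * e₂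
  have hy : (Real.sin θ₂ * Real.cos θ₁ - Real.cos θ₂ * Real.sin θ₁) * yI
      = δ₂ * Real.cos θ₁ - δ₁ * Real.cos θ₂ := by
    linear_combination Real.cos θ₁ * e₂ - Real.cos θ₂ * e₁
  field_simp
  linear_combination (δ₂ * Real.sin θ₂ - δ₁ * Real.sin θ₁) * hx
    - (δ₂ * Real.cos θ₂ - δ₁ * Real.cos θ₁) * hy
    + δ₁ * δ₂ * p1 + δ₁ * δ₂ * p2
end

section
/- The surface Σ = {(x, y, z) ∈ R³ : (z - xy)² = y} is p-minimal: it is a ruled surface whose rulings are the Legendrian lines ℓ_t = {(x, t², t² x + t) : x ∈ R} for t ∈ R; moreover Σ = ⋃_{t∈R} ℓ_t, each ℓ_t lies in the plane {y = t²} and is Legendrian (the contact form dz + x dy - y dx vanishes along ℓ_t), and ⋃_{t∈R} {y = t²} = {(x,y,z) : y ≥ 0} ≠ R³. -/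
open Real Set

/-- Example 4.1: the surface (z - xy)² = y is ruled by Legendrian lines
ℓ_t = {(x, t², t²x + t)}, each lying in the plane {y = t²}; the union of those
parallel planes is the halfspace {y ≥ 0} ≠ ℝ³. Points of ℝ³ are (x, y, z). -/
theorem example_weak_helicoid :
    ({p : ℝ × ℝ × ℝ | (p.2.2 - p.1 * p.2.1) ^ 2 = p.2.1}
        = ⋃ t : ℝ, {p : ℝ × ℝ × ℝ | ∃ x : ℝ, p = (x, t ^ 2, t ^ 2 * x + t)}) ∧
    (∀ t : ℝ, {p : ℝ × ℝ × ℝ | ∃ x : ℝ, p = (x, t ^ 2, t ^ 2 * x + t)}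
        ⊆ {p : ℝ × ℝ × ℝ | p.2.1 = t ^ 2}) ∧
    (∀ t x : ℝ,
      deriv (fun x' => t ^ 2 * x' + t) x
        + x * deriv (fun _ : ℝ => t ^ 2) x
        - t ^ 2 * deriv (fun x' : ℝ => x') x = 0) ∧
    ((⋃ t : ℝ, {p : ℝ × ℝ × ℝ | p.2.1 = t ^ 2}) = {p : ℝ × ℝ × ℝ | 0 ≤ p.2.1}) ∧
    (⋃ t : ℝ, {p : ℝ × ℝ × ℝ | p.2.1 = t ^ 2}) ≠ Set.univ := by
  refine ⟨?_, ?_, ?_, ?_, ?_⟩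
  · ext ⟨x, y, z⟩
    simp only [mem_setOf_eq, mem_iUnion, Prod.mk.injEq]
    constructor
    · rintro h
      exact ⟨z - x * y, x, rfl, h.symm, by rw [h]; ring⟩
    · rintro ⟨t, x', rfl, rfl, rfl⟩
      ring
  · rintro t p ⟨x, rfl⟩
    rfl
  · intro t x
    have h1 : deriv (fun x' => t ^ 2 * x' + t) x = t ^ 2 := by
      rw [deriv_add_const]
      simpa using deriv_const_mul (t ^ 2) (differentiableAt_id' (x := x))
    rw [h1, deriv_const, deriv_id'']
    ring
  · ext ⟨x, y, z⟩
    simp only [mem_setOf_eq, mem_iUnion]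
    constructor
    · rintro ⟨t, ht⟩; exact ht ▸ sq_nonneg t
    · intro h; exact ⟨Real.sqrt y, by rw [sq_sqrt h]⟩
  · intro h
    have : (0, -1, 0) ∈ (⋃ t : ℝ, {p : ℝ × ℝ × ℝ | p.2.1 = t ^ 2}) := h ▸ mem_univ _
    simp only [mem_iUnion, mem_setOf_eq] at this
    obtain ⟨t, ht⟩ := this
    nlinarith [sq_nonneg t]
end

section
/- Let three lines Γ₁, Γ₂, Γ₃ in the plane pairwise intersect in the distinct points P = Γ₁∩Γ₂, Q = Γ₂∩Γ₃, R = Γ₃∩Γ₁, and suppose each Γᵢ is the projection of a characteristic line with height function zᵢ(x,y) = βᵢ x - αᵢ y + γᵢ, where Γᵢ = {(x,y) : (x-αᵢ) cos θᵢ + (y-βᵢ) sin θᵢ = 0}. Then (z₁ - z₂)(P) + (z₂ - z₃)(Q) + (z₃ - z₁)(R) = ± 2·Area(△PQR), i.e., its absolute value equals twice the area of the triangle PQR. -/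
open Real

/-- Proposition 2.2: the sum of the height differences at the three pairwise
intersection points of Γ₁, Γ₂, Γ₃ equals (up to sign) twice the area of the
triangle PQR. -/
theorem sum_height_differences_eq_twice_area
    (α₁ α₂ α₃ β₁ β₂ β₃ γ₁ γ₂ γ₃ θ₁ θ₂ θ₃ : ℝ) (P Q R : ℝ × ℝ)
    (hP₁ : (P.1 - α₁) * Real.cos θ₁ + (P.2 - β₁) * Real.sin θ₁ = 0)
    (hP₂ : (P.1 - α₂) * Real.cos θ₂ + (P.2 - β₂) * Real.sin θ₂ = 0)
    (hQ₂ : (Q.1 - α₂) * Real.cos θ₂ + (Q.2 - β₂) * Real.sin θ₂ = 0)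
    (hQ₃ : (Q.1 - α₃) * Real.cos θ₃ + (Q.2 - β₃) * Real.sin θ₃ = 0)
    (hR₃ : (R.1 - α₃) * Real.cos θ₃ + (R.2 - β₃) * Real.sin θ₃ = 0)
    (hR₁ : (R.1 - α₁) * Real.cos θ₁ + (R.2 - β₁) * Real.sin θ₁ = 0)
    (hPQ : P ≠ Q) (hQR : Q ≠ R) (hRP : R ≠ P) :
    |((β₁ * P.1 - α₁ * P.2 + γ₁) - (β₂ * P.1 - α₂ * P.2 + γ₂))
      + ((β₂ * Q.1 - α₂ * Q.2 + γ₂) - (β₃ * Q.1 - α₃ * Q.2 + γ₃))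
      + ((β₃ * R.1 - α₃ * R.2 + γ₃) - (β₁ * R.1 - α₁ * R.2 + γ₁))|
    = |(Q.1 - P.1) * (R.2 - P.2) - (Q.2 - P.2) * (R.1 - P.1)| := by
  have py₁ := Real.sin_sq_add_cos_sq θ₁
  have py₂ := Real.sin_sq_add_cos_sq θ₂
  have py₃ := Real.sin_sq_add_cos_sq θ₃
  have h : ((β₁ * P.1 - α₁ * P.2 + γ₁) - (β₂ * P.1 - α₂ * P.2 + γ₂))
      + ((β₂ * Q.1 - α₂ * Q.2 + γ₂) - (β₃ * Q.1 - α₃ * Q.2 + γ₃))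
      + ((β₃ * R.1 - α₃ * R.2 + γ₃) - (β₁ * R.1 - α₁ * R.2 + γ₁))
      = -((Q.1 - P.1) * (R.2 - P.2) - (Q.2 - P.2) * (R.1 - P.1)) := by
    linear_combination
      (-(Real.cos θ₁ * (R.2 - β₁) - Real.sin θ₁ * (R.1 - α₁))) * hP₁
      + (-((P.1 - α₁) * Real.sin θ₁ - (P.2 - β₁) * Real.cos θ₁)) * hR₁
      + ((P.1 - α₁) * (R.2 - β₁) - (P.2 - β₁) * (R.1 - α₁)) * py₁
      + (-(Real.cos θ₂ * (P.2 - β₂) - Real.sin θ₂ * (P.1 - α₂))) * hQ₂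
      + (-((Q.1 - α₂) * Real.sin θ₂ - (Q.2 - β₂) * Real.cos θ₂)) * hP₂
      + ((Q.1 - α₂) * (P.2 - β₂) - (Q.2 - β₂) * (P.1 - α₂)) * py₂
      + (-(Real.cos θ₃ * (Q.2 - β₃) - Real.sin θ₃ * (Q.1 - α₃))) * hR₃
      + (-((R.1 - α₃) * Real.sin θ₃ - (R.2 - β₃) * Real.cos θ₃)) * hQ₃
      + ((R.1 - α₃) * (Q.2 - β₃) - (R.2 - β₃) * (Q.1 - α₃)) * py₃
  rw [h, abs_neg]
end

section
/- Let α(t) = 0, β(t) = t, γ(t) = -t, θ(t) = arctan t + π/2, so cos θ(t) = -t/√(1+t²) and sin θ(t) = 1/√(1+t²). Then the image of X(s,t) = (s sin θ(t), -s cos θ(t) + t, s t sin θ(t) - t) equals the set {(x,y,z) ∈ R³ : z(x+1) = y(x-1)}. -/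
open Real Set

/-!
Since sin θ(t) = 1/√(1+t²) and cos θ(t) = -t/√(1+t²), substituting u = s/√(1+t²) (a bijection
in s for each fixed t) turns X into the ruled surface (u, t) ↦ (u, t(u+1), t(u-1)). A point
(x, y, z) of z(x+1) = y(x-1) lies on the ruling t = y/(x+1) when x ≠ -1, and on the ruling
through (-1, 0, -2t) with t = -z/2 when x = -1.
-/

theorem range_ruledSurface {K : Type*} [Field K] [NeZero (2 : K)] :
    range (fun p : K × K => (p.1, p.2 * (p.1 + 1), p.2 * (p.1 - 1)))
      = {q : K × K × K | q.2.2 * (q.1 + 1) = q.2.1 * (q.1 - 1)} := by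
  ext ⟨x, y, z⟩
  simp only [mem_range, mem_ofPred_eq, Prod.exists, Prod.mk.injEq]
  constructor
  · rintro ⟨u, t, rfl, rfl, rfl⟩
    ring
  · intro h
    rcases eq_or_ne (x + 1) 0 with hx | hx
    · obtain rfl : x = -1 := eq_neg_of_add_eq_zero_left hx
      obtain rfl : y = 0 := by
        have : y * 2 = 0 := by linear_combination h
        exact (mul_eq_zero.mp this).resolve_right two_ne_zero
      exact ⟨-1, -z / 2, rfl, by ring, by field_simp; ring⟩
    · refine ⟨x, y / (x + 1), rfl, by field_simp, ?_⟩
      rw [div_mul_eq_mul_div, div_eq_iff hx]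
      exact h.symm

theorem surjective_div_sqrt_one_add_sq :
    Function.Surjective (fun p : ℝ × ℝ => (p.1 / √(1 + p.2 ^ 2), p.2)) := by
  rintro ⟨u, t⟩
  exact ⟨(u * √(1 + t ^ 2), t), by simp [show √(1 + t ^ 2) ≠ 0 by positivity]⟩

/-- Example 2.1: with θ(t) = arctan t + π/2, α = 0, β(t) = t, γ(t) = -t, the
image of X(s,t) is exactly the surface z(x+1) = y(x-1). -/
theorem example21_image :
    Set.range (fun p : ℝ × ℝ =>
      (p.1 * Real.sin (Real.arctan p.2 + Real.pi / 2),
        -p.1 * Real.cos (Real.arctan p.2 + Real.pi / 2) + p.2,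
        p.1 * p.2 * Real.sin (Real.arctan p.2 + Real.pi / 2) - p.2))
    = {q : ℝ × ℝ × ℝ | q.2.2 * (q.1 + 1) = q.2.1 * (q.1 - 1)} := by
  have reparam : (fun p : ℝ × ℝ =>
      (p.1 * Real.sin (Real.arctan p.2 + Real.pi / 2),
        -p.1 * Real.cos (Real.arctan p.2 + Real.pi / 2) + p.2,
        p.1 * p.2 * Real.sin (Real.arctan p.2 + Real.pi / 2) - p.2))
      = (fun p : ℝ × ℝ => (p.1, p.2 * (p.1 + 1), p.2 * (p.1 - 1)))
        ∘ (fun p : ℝ × ℝ => (p.1 / √(1 + p.2 ^ 2), p.2)) := by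
    funext ⟨s, t⟩
    simp only [Function.comp_apply, sin_add_pi_div_two, cos_add_pi_div_two, cos_arctan,
      sin_arctan, Prod.mk.injEq]
    exact ⟨by ring, by ring, by ring⟩
  rw [reparam, surjective_div_sqrt_one_add_sq.range_comp, range_ruledSurface]
end

section
/- The map X(s,t) = (s/√(1+t²), st/√(1+t²) + t, st/√(1+t²) - t) from R² to R³ is injective. -/
open Real

/-- Example 2.1: the parametrization of the surface z(x+1) = y(x-1) is injective. -/
theorem example21_injective :
    Function.Injective (fun p : ℝ × ℝ =>
      (p.1 / Real.sqrt (1 + p.2 ^ 2),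
        p.1 * p.2 / Real.sqrt (1 + p.2 ^ 2) + p.2,
        p.1 * p.2 / Real.sqrt (1 + p.2 ^ 2) - p.2)) := by
  intro p q h
  simp only [Prod.mk.injEq] at h
  obtain ⟨h1, h2, h3⟩ := h
  have ht : p.2 = q.2 := by linarith
  have hpos : Real.sqrt (1 + p.2 ^ 2) ≠ 0 := by
    positivity
  rw [ht] at h1
  have hs : p.1 = q.1 := by
    field_simp at h1
    exact h1
  exact Prod.ext hs ht
end
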